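/- If B is exponentially distributed with rate λ > 0, then for every integer l, the l-th bit in the binary expansion of B satisfies Pr{B_l = 1} = 1/(e^{λ 2^l} + 1), where B_l = 1 iff B ∈ ⋃_{k≥1} [2^l(2k-1), 2^l·2k). -/

import Mathlib

/-!
For `c > 0`, `⌊x / c⌋ = n` exactly on `[n c, (n + 1) c)`, which the exponential law charges
with `qⁿ (1 - q)`, `q = e^{-λc}`: the integer part of `B / c` is geometric. Summing over odd
`n` gives `q (1 - q) / (1 - q²) = q / (1 + q) = 1 / (e^{λc} + 1)`; negative `x` carry no mass.
-/

open MeasureTheory ProbabilityTheory Real Set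

namespace ProbabilityTheory

lemma expMeasure_singleton (r x : ℝ) : expMeasure r {x} = 0 :=
  withDensity_absolutelyContinuous volume _ (by simp)

lemma expMeasure_Iio_zero (r : ℝ) : expMeasure r (Iio 0) = 0 := by
  rw [expMeasure, gammaMeasure, withDensity_apply _ measurableSet_Iio]
  exact lintegral_gammaPDF_of_nonpos le_rfl

lemma expMeasure_Ico {r : ℝ} (hr : 0 < r) {a b : ℝ} (ha : 0 ≤ a) (hab : a ≤ b) :
    expMeasure r (Ico a b) = ENNReal.ofReal (exp (-(r * a)) - exp (-(r * b))) := by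
  have := isProbabilityMeasure_expMeasure hr
  rw [measure_congr (Ico_ae_eq_Ioc' (expMeasure_singleton r a) (expMeasure_singleton r b)),
    ← measure_cdf (expMeasure r), StieltjesFunction.measure_Ioc, cdf_expMeasure_eq hr,
    cdf_expMeasure_eq hr, if_pos ha, if_pos (ha.trans hab), sub_sub_sub_cancel_left]

lemma setOf_floor_div_eq {c : ℝ} (hc : 0 < c) (n : ℤ) :
    {x : ℝ | ⌊x / c⌋ = n} = Ico (n * c) ((n + 1) * c) := by
  ext x
  simp [Int.floor_eq_iff, le_div_iff₀ hc, div_lt_iff₀ hc]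

lemma expMeasure_floor_div_eq {r c : ℝ} (hr : 0 < r) (hc : 0 < c) (n : ℕ) :
    expMeasure r {x | ⌊x / c⌋ = n} =
      ENNReal.ofReal (exp (-(r * c)) ^ n * (1 - exp (-(r * c)))) := by
  rw [setOf_floor_div_eq hc, expMeasure_Ico hr (by positivity) (by gcongr; simp), ← exp_nat_mul,
    mul_sub, mul_one, ← exp_add]
  push_cast
  ring_nf

lemma setOf_odd_floor_div_inter_Ici {c : ℝ} (hc : 0 < c) :
    {x : ℝ | Odd ⌊x / c⌋} ∩ Ici 0 =
      ⋃ k : ℕ, {x : ℝ | ⌊x / c⌋ = (2 * k + 1 : ℕ)} := by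
  ext x
  simp only [mem_inter_iff, mem_ofPred_eq, mem_Ici, mem_iUnion]
  constructor
  · rintro ⟨⟨n, hn⟩, hx⟩
    have : 0 ≤ ⌊x / c⌋ := Int.floor_nonneg.2 (div_nonneg hx hc.le)
    exact ⟨n.toNat, by omega⟩
  · rintro ⟨k, hk⟩
    refine ⟨⟨k, by omega⟩, ?_⟩
    have h : (1 : ℤ) ≤ ⌊x / c⌋ := by omega
    have := (le_div_iff₀ hc).1 (by exact_mod_cast Int.le_floor.1 h)
    linarith

lemma hasSum_odd_geometric {q : ℝ} (hq₀ : 0 ≤ q) (hq₁ : q < 1) :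
    HasSum (fun k : ℕ => q ^ (2 * k + 1) * (1 - q)) (q / (1 + q)) := by
  have hq₂ : q ^ 2 < 1 := by nlinarith
  have hterm : (fun k : ℕ => q ^ (2 * k + 1) * (1 - q)) = fun k => q * (1 - q) * (q ^ 2) ^ k := by
    funext k
    ring
  have hsum : q * (1 - q) * (1 - q ^ 2)⁻¹ = q / (1 + q) := by
    have : 0 < 1 - q := sub_pos.2 hq₁
    rw [show 1 - q ^ 2 = (1 - q) * (1 + q) by ring]
    field_simp
  rw [hterm, ← hsum]
  exact (hasSum_geometric_of_lt_one (by positivity) hq₂).mul_left _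

lemma expMeasure_setOf_odd_floor_div {r c : ℝ} (hr : 0 < r) (hc : 0 < c) :
    expMeasure r {x | Odd ⌊x / c⌋} = ENNReal.ofReal (1 / (exp (r * c) + 1)) := by
  have hq₁ : exp (-(r * c)) < 1 := exp_lt_one_iff.2 (by nlinarith)
  have hsum := hasSum_odd_geometric (exp_pos _).le hq₁
  have hdisj : Pairwise
      (Function.onFun Disjoint fun k : ℕ => {x : ℝ | ⌊x / c⌋ = (2 * k + 1 : ℕ)}) :=
    fun i j hij => disjoint_left.2 fun x hi hj => hij (by simp_all)
  rw [← measure_inter_conull (by rw [compl_Ici]; exact expMeasure_Iio_zero r),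
    setOf_odd_floor_div_inter_Ici hc,
    measure_iUnion hdisj fun k => setOf_floor_div_eq hc _ ▸ measurableSet_Ico]
  simp only [expMeasure_floor_div_eq hr hc]
  rw [← ENNReal.ofReal_tsum_of_nonneg (fun k => by have := hq₁.le; positivity) hsum.summable,
    hsum.tsum_eq, exp_neg]
  congr 1
  field_simp

end ProbabilityTheory

theorem stmt_1 (lam : ℝ) (hlam : 0 < lam) (l : ℤ) :
    expMeasure lam {x : ℝ | Odd ⌊x / 2 ^ l⌋} =
      ENNReal.ofReal (1 / (Real.exp (lam * 2 ^ l) + 1)) :=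
  expMeasure_setOf_odd_floor_div hlam (zpow_pos two_pos l)
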